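/- Let γ_A ≥ 1 and γ₀ be integers. For every a, b ∈ ℚ_p with a ≠ 0 there exist unique γ ∈ ℤ, a natural number J with 1 ≤ J < p^{γ_A} and p ∤ J, and n ∈ R_{1−γ₀}, such that, setting a₁ = p^γ·J ∈ ℚ_p, one has |a·a₁^{-1} − 1|_p ≤ p^{-γ_A} and |(b − a₁ n)·a₁^{-1}|_p ≤ p^{γ₀−1}. (Equivalently: every element G(a,b) of the p-adic affine group factors uniquely as G(p^γ J, p^γ J n)·G(a₀, b₀) with |a₀ − 1|_p ≤ p^{-γ_A} and |b₀|_p ≤ p^{γ₀−1}.) -/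

import Mathlib

/-!
Write `a = p^v u` with `v = v_p(a)` and `|u| = 1`. Since `|J| = 1`, the condition
`|a (p^γ J)⁻¹ - 1| < 1` forces `γ = v` and then reads `|u - J| ≤ p^{-γ_A}`, so `J` is the
truncation of `u` modulo `p^{γ_A}` (automatically prime to `p`). Likewise every element of `R_σ`
is `m p^{σ-N}` with `m < p^N` for all large `N`, and `|x - m p^{σ-N}| ≤ p^{-σ}` says that `m` is
the truncation of `x p^{N-σ}` modulo `p^N`. Uniqueness in both cases comes down to: two naturals
below `p^N` that are `p`-adically within `p^{-N}` are equal.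
-/

open MeasureTheory

/-- Action of the `p`-adic affine group on complex-valued functions:
`(G(a,b)f)(x) = |a|_p^{-1/2} f((x-b)/a)`. -/
noncomputable def Gact (p : ℕ) [Fact p.Prime] (a b : ℚ_[p]) (f : ℚ_[p] → ℂ) : ℚ_[p] → ℂ :=
  fun x => ((‖a‖ ^ (-(1/2) : ℝ) : ℝ) : ℂ) * f ((x - b) / a)

/-- `Ω(|x|_p)`: the indicator function of the unit ball `ℤ_p`. -/
noncomputable def Omega (p : ℕ) [Fact p.Prime] : ℚ_[p] → ℂ :=
  fun x => if ‖x‖ ≤ 1 then 1 else 0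

/-- `R_σ`: the set of finite sums `∑_{l=-δ}^{σ-1} n_l p^l` with digits `n_l ∈ {0,…,p-1}`,
a complete set of representatives of `ℚ_p / p^σ ℤ_p`. -/
def Rset (p : ℕ) [Fact p.Prime] (σ : ℤ) : Set ℚ_[p] :=
  { x | ∃ (δ : ℕ) (d : ℤ → ℕ), (∀ l, d l < p) ∧
      x = ∑ l ∈ Finset.Icc (-(δ : ℤ)) (σ - 1), (d l : ℚ_[p]) * (p : ℚ_[p]) ^ l }

open Filter

lemma Finset.sum_Icc_eq_sum_range_sub {M : Type*} [AddCommMonoid M] (f : ℤ → M) {δ N : ℕ}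
    {σ : ℤ} (h : (N : ℤ) = δ + σ) :
    ∑ l ∈ Finset.Icc (-(δ : ℤ)) (σ - 1), f l = ∑ k ∈ Finset.range N, f (k - δ) := by
  refine Finset.sum_nbij' (fun l => (l + δ).toNat) (fun k => (k : ℤ) - δ) ?_ ?_ ?_ ?_ ?_ <;>
    intro x hx <;> simp only [Finset.mem_Icc, Finset.mem_range] at hx ⊢ <;>
    first | omega | (congr 1; omega)

lemma Nat.sum_range_div_pow_mod_mul_pow (b m N : ℕ) :
    ∑ k ∈ Finset.range N, m / b ^ k % b * b ^ k = m % b ^ N := by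
  induction N with
  | zero => simp [Nat.mod_one]
  | succ N ih => rw [Finset.sum_range_succ, ih, Nat.mod_pow_succ, mul_comm]

lemma Nat.sum_range_mul_pow_lt {b : ℕ} {d : ℕ → ℕ} (hd : ∀ k, d k < b) (N : ℕ) :
    ∑ k ∈ Finset.range N, d k * b ^ k < b ^ N := by
  induction N with
  | zero => simp
  | succ N ih =>
    have hdN : d N * b ^ N ≤ (b - 1) * b ^ N :=
      Nat.mul_le_mul_right _ (Nat.le_sub_one_of_lt (hd N))
    rw [Finset.sum_range_succ, pow_succ', Nat.sub_one_mul] at *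
    have : b ^ N ≤ b * b ^ N := Nat.le_mul_of_pos_left _ ((Nat.zero_le _).trans_lt (hd 0))
    omega

namespace Padic

lemma one_lt_natCast_prime (p : ℕ) [Fact p.Prime] : (1 : ℝ) < p :=
  mod_cast (Fact.out : p.Prime).one_lt

variable {p : ℕ} [Fact p.Prime]

theorem existsUnique_natCast_norm_sub_le {x : ℚ_[p]} (hx : ‖x‖ ≤ 1) (N : ℕ) :
    ∃! m : ℕ, m < p ^ N ∧ ‖x - m‖ ≤ (p : ℝ) ^ (-(N : ℤ)) := by
  let z : ℤ_[p] := ⟨x, hx⟩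
  have happr : ‖x - z.appr N‖ ≤ (p : ℝ) ^ (-(N : ℤ)) :=
    (PadicInt.norm_le_pow_iff_mem_span_pow _ N).mpr (PadicInt.appr_spec N z)
  refine ⟨z.appr N, ⟨z.appr_lt N, happr⟩, fun m ⟨hm, hxm⟩ => ?_⟩
  refine Nat.ModEq.eq_of_lt_of_lt ?_ hm (z.appr_lt N)
  rw [Nat.modEq_iff_dvd, Nat.cast_pow, ← norm_int_le_pow_iff_dvd]
  push_cast
  have := IsUltrametricDist.dist_triangle_max (z.appr N : ℚ_[p]) x m
  rw [dist_comm _ x, dist_eq_norm, dist_eq_norm, dist_eq_norm] at this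
  exact this.trans (max_le happr hxm)

lemma sum_Icc_natCast_mul_zpow (D : ℤ → ℕ) {δ N : ℕ} {σ : ℤ} (h : (N : ℤ) = δ + σ) :
    ∑ l ∈ Finset.Icc (-(δ : ℤ)) (σ - 1), (D l : ℚ_[p]) * (p : ℚ_[p]) ^ l =
      ((∑ k ∈ Finset.range N, D (k - δ) * p ^ k : ℕ) : ℚ_[p]) * (p : ℚ_[p]) ^ (σ - N) := by
  have hp0 : (p : ℚ_[p]) ≠ 0 := Nat.cast_ne_zero.mpr (Fact.out : p.Prime).ne_zero
  rw [Finset.sum_Icc_eq_sum_range_sub _ h]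
  push_cast
  rw [Finset.sum_mul]
  refine Finset.sum_congr rfl fun k _ => ?_
  rw [mul_assoc, ← zpow_natCast, ← zpow_add₀ hp0]
  congr 2
  omega

lemma natCast_mul_zpow_mem_Rset {σ : ℤ} {N m : ℕ} (hσN : σ ≤ N) (hm : m < p ^ N) :
    (m : ℚ_[p]) * (p : ℚ_[p]) ^ (σ - N) ∈ Rset p σ := by
  obtain ⟨δ, hδ⟩ : ∃ δ : ℕ, (N : ℤ) = δ + σ := ⟨(N - σ).toNat, by omega⟩
  refine ⟨δ, fun l => m / p ^ (l + δ).toNat % p,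
    fun l => Nat.mod_lt _ (Fact.out : p.Prime).pos, ?_⟩
  rw [sum_Icc_natCast_mul_zpow _ hδ]
  simp only [sub_add_cancel, Int.toNat_natCast]
  rw [Nat.sum_range_div_pow_mod_mul_pow, Nat.mod_eq_of_lt hm]

lemma eventually_exists_eq_natCast_mul_zpow {σ : ℤ} {x : ℚ_[p]} (hx : x ∈ Rset p σ) :
    ∀ᶠ N : ℕ in atTop, ∃ m : ℕ, m < p ^ N ∧ x = m * (p : ℚ_[p]) ^ (σ - N) := by
  obtain ⟨δ₀, d, hd, rfl⟩ := hx
  filter_upwards [eventually_ge_atTop (δ₀ + σ).toNat] with N hN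
  obtain ⟨δ, hδ⟩ : ∃ δ : ℕ, (N : ℤ) = δ + σ := ⟨(N - σ).toNat, by omega⟩
  let d' : ℤ → ℕ := fun l => if -(δ₀ : ℤ) ≤ l then d l else 0
  refine ⟨_, Nat.sum_range_mul_pow_lt (d := fun k => d' (k - δ)) (fun k => ?_) N, ?_⟩
  · dsimp only [d']
    split_ifs
    exacts [hd _, (Fact.out : p.Prime).pos]
  calc ∑ l ∈ Finset.Icc (-(δ₀ : ℤ)) (σ - 1), (d l : ℚ_[p]) * (p : ℚ_[p]) ^ l
      = ∑ l ∈ Finset.Icc (-(δ₀ : ℤ)) (σ - 1), (d' l : ℚ_[p]) * (p : ℚ_[p]) ^ l :=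
        Finset.sum_congr rfl fun l hl => by simp [d', (Finset.mem_Icc.1 hl).1]
    _ = ∑ l ∈ Finset.Icc (-(δ : ℤ)) (σ - 1), (d' l : ℚ_[p]) * (p : ℚ_[p]) ^ l := by
        refine Finset.sum_subset (Finset.Icc_subset_Icc (by omega) le_rfl) fun l hl hl₀ => ?_
        simp only [Finset.mem_Icc] at hl hl₀
        simp [d', show ¬ -(δ₀ : ℤ) ≤ l by omega]
    _ = _ := sum_Icc_natCast_mul_zpow d' hδ

lemma eventually_norm_mul_zpow_le_one (x : ℚ_[p]) (σ : ℤ) :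
    ∀ᶠ N : ℕ in atTop, ‖x * (p : ℚ_[p]) ^ ((N : ℤ) - σ)‖ ≤ 1 := by
  obtain ⟨k, hk⟩ := pow_unbounded_of_one_lt ‖x‖ (one_lt_natCast_prime p)
  filter_upwards [eventually_ge_atTop (k + σ.toNat)] with N hN
  have hp := zero_lt_one.trans (one_lt_natCast_prime p)
  rw [norm_mul, norm_p_zpow, neg_sub]
  calc ‖x‖ * (p : ℝ) ^ (σ - N) ≤ (p : ℝ) ^ k * (p : ℝ) ^ (σ - N) := by gcongr
    _ = (p : ℝ) ^ ((k : ℤ) + (σ - N)) := by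
        rw [zpow_add₀ hp.ne', zpow_natCast]
    _ ≤ 1 := zpow_le_one_of_nonpos₀ (one_lt_natCast_prime p).le (by omega)

lemma norm_sub_natCast_mul_zpow_le_iff (x : ℚ_[p]) (m : ℕ) (σ : ℤ) (N : ℕ) :
    ‖x - m * (p : ℚ_[p]) ^ (σ - N)‖ ≤ (p : ℝ) ^ (-σ) ↔
      ‖x * (p : ℚ_[p]) ^ ((N : ℤ) - σ) - m‖ ≤ (p : ℝ) ^ (-(N : ℤ)) := by
  have hp0 : (p : ℚ_[p]) ≠ 0 := Nat.cast_ne_zero.mpr (Fact.out : p.Prime).ne_zero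
  have : x - m * (p : ℚ_[p]) ^ (σ - N) =
      (x * (p : ℚ_[p]) ^ ((N : ℤ) - σ) - m) * (p : ℚ_[p]) ^ (σ - N) := by
    rw [sub_mul, mul_assoc, ← zpow_add₀ hp0]
    simp
  have hp := zero_lt_one.trans (one_lt_natCast_prime p)
  rw [this, norm_mul, norm_p_zpow, ← le_div_iff₀ (zpow_pos hp _), ← zpow_sub₀ hp.ne']
  ring_nf

theorem existsUnique_mem_Rset_norm_sub_le (σ : ℤ) (x : ℚ_[p]) :
    ∃! n, n ∈ Rset p σ ∧ ‖x - n‖ ≤ (p : ℝ) ^ (-σ) := by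
  refine existsUnique_of_exists_of_unique ?_ ?_
  · obtain ⟨N, hσN, hxN⟩ :=
      ((eventually_ge_atTop σ.toNat).and (eventually_norm_mul_zpow_le_one x σ)).exists
    obtain ⟨m, ⟨hm, hxm⟩, -⟩ := existsUnique_natCast_norm_sub_le hxN N
    exact ⟨_, natCast_mul_zpow_mem_Rset (by omega) hm,
      (norm_sub_natCast_mul_zpow_le_iff x m σ N).2 hxm⟩
  · rintro n₁ n₂ ⟨h₁, hx₁⟩ ⟨h₂, hx₂⟩
    obtain ⟨N, ⟨m₁, hm₁, rfl⟩, ⟨m₂, hm₂, rfl⟩, hxN⟩ :=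
      ((eventually_exists_eq_natCast_mul_zpow h₁).and ((eventually_exists_eq_natCast_mul_zpow
        h₂).and (eventually_norm_mul_zpow_le_one x σ))).exists
    rw [norm_sub_natCast_mul_zpow_le_iff] at hx₁ hx₂
    rw [(existsUnique_natCast_norm_sub_le hxN N).unique ⟨hm₁, hx₁⟩ ⟨hm₂, hx₂⟩]

lemma norm_mul_zpow_neg_eq_one_iff {a : ℚ_[p]} (ha : a ≠ 0) (γ : ℤ) :
    ‖a * (p : ℚ_[p]) ^ (-γ)‖ = 1 ↔ γ = a.valuation := by
  have hp := one_lt_natCast_prime p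
  rw [norm_mul, norm_p_zpow, neg_neg, norm_eq_zpow_neg_valuation ha,
    ← zpow_add₀ (zero_lt_one.trans hp).ne', zpow_eq_one_iff_right₀ (by linarith) hp.ne']
  omega

lemma norm_mul_inv_sub_one_eq (a : ℚ_[p]) {J : ℚ_[p]} (hJ : ‖J‖ = 1) (γ : ℤ) :
    ‖a * ((p : ℚ_[p]) ^ γ * J)⁻¹ - 1‖ = ‖a * (p : ℚ_[p]) ^ (-γ) - J‖ := by
  have hJ0 : J ≠ 0 := norm_ne_zero_iff.1 (hJ ▸ one_ne_zero)
  rw [show a * ((p : ℚ_[p]) ^ γ * J)⁻¹ - 1 = (a * (p : ℚ_[p]) ^ (-γ) - J) * J⁻¹ by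
    rw [zpow_neg, sub_mul, mul_inv_cancel₀ hJ0, mul_inv, mul_assoc], norm_mul, norm_inv, hJ,
    inv_one, mul_one]

lemma norm_natCast_eq_one_iff_not_dvd {J : ℕ} : ‖(J : ℚ_[p])‖ = 1 ↔ ¬ p ∣ J := by
  rw [norm_natCast_eq_one_iff, (Fact.out : p.Prime).coprime_iff_not_dvd]

lemma norm_mul_inv_sub_one_le_iff {a : ℚ_[p]} (ha : a ≠ 0) {J : ℕ} (hJ : ¬ p ∣ J) {ε : ℝ}
    (hε : ε < 1) (γ : ℤ) :
    ‖a * ((p : ℚ_[p]) ^ γ * J)⁻¹ - 1‖ ≤ ε ↔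
      γ = a.valuation ∧ ‖a * (p : ℚ_[p]) ^ (-a.valuation) - J‖ ≤ ε := by
  have hJ' := norm_natCast_eq_one_iff_not_dvd.2 hJ
  rw [norm_mul_inv_sub_one_eq a hJ']
  refine ⟨fun h => ?_, fun ⟨hγ, h⟩ => hγ ▸ h⟩
  have hγ := (norm_mul_zpow_neg_eq_one_iff ha γ).1 <|
    hJ' ▸ norm_eq_of_norm_sub_lt_right (hJ' ▸ h.trans_lt hε)
  exact ⟨hγ, hγ ▸ h⟩

end Padic

theorem stmt_9 (p : ℕ) [Fact p.Prime] (γA γ₀ : ℤ) (hγA : 1 ≤ γA)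
    (a b : ℚ_[p]) (ha : a ≠ 0) :
    ∃! q : ℤ × ℕ × ℚ_[p],
      (1 ≤ q.2.1 ∧ (q.2.1 : ℚ) < (p : ℚ) ^ γA ∧ ¬ (p ∣ q.2.1) ∧ q.2.2 ∈ Rset p (1 - γ₀)) ∧
      ‖a * ((p : ℚ_[p]) ^ q.1 * (q.2.1 : ℚ_[p]))⁻¹ - 1‖ ≤ (p : ℝ) ^ (-γA) ∧
      ‖(b - (p : ℚ_[p]) ^ q.1 * (q.2.1 : ℚ_[p]) * q.2.2) *
          ((p : ℚ_[p]) ^ q.1 * (q.2.1 : ℚ_[p]))⁻¹‖ ≤ (p : ℝ) ^ (γ₀ - 1) := by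
  lift γA to ℕ using (by omega) with N
  have hN : (p : ℝ) ^ (-(N : ℤ)) < 1 :=
    zpow_lt_one_of_neg₀ (Padic.one_lt_natCast_prime p) (by omega)
  have hu : ‖a * (p : ℚ_[p]) ^ (-a.valuation)‖ = 1 :=
    (Padic.norm_mul_zpow_neg_eq_one_iff ha _).2 rfl
  obtain ⟨J, ⟨hJlt, hJ⟩, hJuniq⟩ := Padic.existsUnique_natCast_norm_sub_le hu.le N
  have hpJ : ¬ p ∣ J := Padic.norm_natCast_eq_one_iff_not_dvd.1 <|
    hu ▸ (Padic.norm_eq_of_norm_sub_lt_left (hu ▸ hJ.trans_lt hN)).symm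
  have hJ0 : J ≠ 0 := by rintro rfl; exact hpJ (dvd_zero p)
  set a₁ := (p : ℚ_[p]) ^ a.valuation * J
  have hsplit (c : ℚ_[p]) : (b - a₁ * c) * a₁⁻¹ = b * a₁⁻¹ - c := by
    have : a₁ ≠ 0 :=
      mul_ne_zero (zpow_ne_zero _ (Nat.cast_ne_zero.2 (Fact.out : p.Prime).ne_zero))
        (Nat.cast_ne_zero.2 hJ0)
    field_simp
  obtain ⟨n, ⟨hnR, hn⟩, hnuniq⟩ := Padic.existsUnique_mem_Rset_norm_sub_le (1 - γ₀) (b * a₁⁻¹)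
  rw [neg_sub] at hn
  simp only [neg_sub] at hnuniq
  refine ⟨(a.valuation, J, n), ⟨⟨Nat.one_le_iff_ne_zero.2 hJ0, by exact_mod_cast hJlt, hpJ, hnR⟩,
    (Padic.norm_mul_inv_sub_one_le_iff ha hpJ hN _).2 ⟨rfl, hJ⟩, by rwa [hsplit]⟩, ?_⟩
  rintro ⟨γ, J', n'⟩ ⟨⟨-, hJ'lt, hpJ', hn'R⟩, h₁, h₂⟩
  obtain ⟨rfl, h₁⟩ := (Padic.norm_mul_inv_sub_one_le_iff ha hpJ' hN γ).1 h₁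
  obtain rfl := hJuniq J' ⟨by exact_mod_cast hJ'lt, h₁⟩
  obtain rfl := hnuniq n' ⟨hn'R, by rwa [hsplit] at h₂⟩
  rfl
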